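/- Let K ≥ 2 and let g_1, …, g_T : {1,…,K} → [0,1] be an arbitrary sequence of reward functions. If the Multiplicative Weights distributions p_t are computed with the time-varying learning rates η_t = 2·√(log K / t), then for every action a⋆ ∈ {1,…,K}: Σ_{t=1}^T g_t(a⋆) − Σ_{t=1}^T Σ_{a=1}^K p_t[a]·g_t(a) ≤ √(T · log K). -/

import Mathlib

open Finset Real ProbabilityTheory MeasureTheory

/-!
The potential `Φ_t(η) = η⁻¹ log (K⁻¹ ∑ₐ exp (η Sₜ(a)))` of the cumulative rewards `Sₜ` is the
quantity to track. By Hoeffding's lemma for the distribution `pₜ`, one round raises `Φ(ηₜ)` by at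
most the expected reward `⟨pₜ, gₜ⟩` plus `ηₜ / 8`; by the power-mean inequality `Φ` is nondecreasing
in `η`, so switching to the smaller rate `ηₜ₊₁` does not increase it. Telescoping bounds
`Φ_T(η_T)` by the learner's total reward plus `∑ ηₜ / 8`, while `Φ_T(η_T) ≥ S_T(a⋆) - log K / η_T`.
For `ηₜ = 2 √(log K / t)` both error terms are at most `√(T log K) / 2`.
-/

theorem log_sum_mul_exp_le {ι : Type*} [Fintype ι] {p x : ι → ℝ} (hp : ∀ a, 0 ≤ p a)
    (hp1 : ∑ a, p a = 1) (hx : ∀ a, x a ∈ Set.Icc (0 : ℝ) 1) (t : ℝ) :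
    log (∑ a, p a * exp (t * x a)) ≤ t * ∑ a, p a * x a + t ^ 2 / 8 := by
  let _ : MeasurableSpace ι := ⊤
  have : DiscreteMeasurableSpace ι := ⟨fun _ => trivial⟩
  let μ : PMF ι := PMF.ofFintype (fun a => ENNReal.ofReal (p a)) (by
    rw [← ENNReal.ofReal_sum_of_nonneg fun a _ => hp a, hp1, ENNReal.ofReal_one])
  have hμ (f : ι → ℝ) : ∫ a, f a ∂μ.toMeasure = ∑ a, p a * f a := by
    simp [μ, PMF.integral_eq_sum, ENNReal.toReal_ofReal (hp _)]
  have hpos := mgf_pos (X := x) (μ := μ.toMeasure) (t := t) .of_finite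
  have hoeffding := (hasSubgaussianMGF_of_mem_Icc (μ := μ.toMeasure) (X := x) (a := 0) (b := 1)
    Measurable.of_discrete.aemeasurable (.of_forall hx)).mgf_le t
  simp only [mgf, hμ, sub_eq_add_neg, mul_add, exp_add, ← mul_assoc, ← sum_mul] at hoeffding hpos
  have hlog := log_le_log (by positivity) hoeffding
  rw [log_mul hpos.ne' (exp_pos _).ne', log_exp, log_exp] at hlog
  norm_num at hlog
  linarith

section MultiplicativeWeights

variable {ι : Type*} [Fintype ι]

noncomputable def mwWeights (η : ℝ) (S : ι → ℝ) (a : ι) : ℝ :=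
  exp (η * S a) / ∑ b, exp (η * S b)

noncomputable def mwPotential (η : ℝ) (S : ι → ℝ) : ℝ :=
  η⁻¹ * log ((Fintype.card ι : ℝ)⁻¹ * ∑ a, exp (η * S a))

theorem mwWeights_nonneg (η : ℝ) (S : ι → ℝ) (a : ι) : 0 ≤ mwWeights η S a := by
  unfold mwWeights; positivity

variable [Nonempty ι]

theorem sum_mwWeights (η : ℝ) (S : ι → ℝ) : ∑ a, mwWeights η S a = 1 := by
  have : 0 < ∑ b, exp (η * S b) := sum_pos (fun _ _ => exp_pos _) univ_nonempty
  simp only [mwWeights, ← sum_div, div_self this.ne']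

theorem mwPotential_zero_right (η : ℝ) : mwPotential η (0 : ι → ℝ) = 0 := by
  simp [mwPotential]

theorem sub_log_card_div_le_mwPotential {η : ℝ} (hη : 0 < η) (S : ι → ℝ) (a : ι) :
    S a - log (Fintype.card ι) / η ≤ mwPotential η S := by
  have hcard : (0 : ℝ) < Fintype.card ι := by exact_mod_cast Fintype.card_pos
  have hsingle : exp (η * S a) ≤ ∑ b, exp (η * S b) :=
    single_le_sum (f := fun b => exp (η * S b)) (fun _ _ => (exp_pos _).le) (mem_univ a)
  have hlog := log_le_log (by positivity)
    (mul_le_mul_of_nonneg_left hsingle (inv_nonneg.2 hcard.le))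
  rw [log_mul (inv_pos.2 hcard).ne' (exp_pos _).ne', log_exp, log_inv] at hlog
  calc S a - log (Fintype.card ι) / η = η⁻¹ * (-log (Fintype.card ι) + η * S a) := by
        field_simp; ring
    _ ≤ mwPotential η S := mul_le_mul_of_nonneg_left hlog (inv_nonneg.2 hη.le)

theorem mwPotential_monotoneOn (S : ι → ℝ) :
    MonotoneOn (fun η => mwPotential η S) (Set.Ioi 0) := by
  intro η (hη : 0 < η) θ (hθ : 0 < θ) hηθ
  have hcard : (0 : ℝ) < Fintype.card ι := by exact_mod_cast Fintype.card_pos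
  have hw : ∑ _a : ι, (Fintype.card ι : ℝ)⁻¹ = 1 := by simp [hcard.ne']
  have hpow : ∀ a, exp (η * S a) ^ (θ / η) = exp (θ * S a) := fun a => by
    rw [← exp_mul]; field_simp
  have hmean := rpow_arith_mean_le_arith_mean_rpow univ (fun _ => (Fintype.card ι : ℝ)⁻¹)
    (fun a => exp (η * S a)) (fun _ _ => by positivity) hw (fun _ _ => (exp_pos _).le)
    ((one_le_div hη).2 hηθ)
  simp only [← mul_sum, hpow] at hmean
  have hM : 0 < (Fintype.card ι : ℝ)⁻¹ * ∑ a, exp (η * S a) := by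
    have := sum_pos (fun a _ => exp_pos (η * S a)) (univ_nonempty (α := ι))
    positivity
  have hlog := log_le_log (by positivity) hmean
  rw [log_rpow hM] at hlog
  calc mwPotential η S = θ⁻¹ * (θ / η * log ((Fintype.card ι : ℝ)⁻¹ * ∑ a, exp (η * S a))) := by
        unfold mwPotential; field_simp
    _ ≤ mwPotential θ S := mul_le_mul_of_nonneg_left hlog (inv_nonneg.2 hθ.le)

theorem mwPotential_add_le {η : ℝ} (hη : 0 < η) (S g : ι → ℝ)
    (hg : ∀ a, g a ∈ Set.Icc (0 : ℝ) 1) :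
    mwPotential η (S + g) ≤ mwPotential η S + ∑ a, mwWeights η S a * g a + η / 8 := by
  set Z := ∑ b, exp (η * S b)
  have hZ : 0 < Z := sum_pos (fun _ _ => exp_pos _) univ_nonempty
  set Q := ∑ a, mwWeights η S a * exp (η * g a)
  have hsplit : ∑ a, exp (η * (S + g) a) = Z * Q := by
    simp only [Q, mul_sum, mwWeights, Pi.add_apply, mul_add, exp_add]
    exact sum_congr rfl fun a _ => by field_simp; rfl
  have hQ : 0 < Q :=
    pos_of_mul_pos_right (hsplit ▸ sum_pos (fun _ _ => exp_pos _) univ_nonempty) hZ.le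
  have hhoeffding := log_sum_mul_exp_le (mwWeights_nonneg η S) (sum_mwWeights η S) hg η
  unfold mwPotential
  rw [hsplit, ← mul_assoc, log_mul (by positivity) hQ.ne']
  calc η⁻¹ * (log ((Fintype.card ι : ℝ)⁻¹ * Z) + log Q)
      ≤ η⁻¹ * (log ((Fintype.card ι : ℝ)⁻¹ * Z) + (η * ∑ a, mwWeights η S a * g a + η ^ 2 / 8)) := by
        gcongr
    _ = _ := by field_simp; ring

theorem mwPotential_le_sum (T : ℕ) (η : ℕ → ℝ) (hη : ∀ t < T, 0 < η t)
    (hη_anti : AntitoneOn η (Set.Iio T)) (g : ℕ → ι → ℝ)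
    (hg : ∀ t < T, ∀ a, g t a ∈ Set.Icc (0 : ℝ) 1) :
    mwPotential (η (T - 1)) (∑ t ∈ range T, g t) ≤
      ∑ t ∈ range T, (∑ a, mwWeights (η t) (∑ τ ∈ range t, g τ) a * g t a + η t / 8) := by
  -- at `T = 0` the truncated index `T - 1` is harmless: the potential of `0` vanishes
  induction T with
  | zero => simp [mwPotential_zero_right]
  | succ T ih =>
    have hηT := hη T (Nat.lt_succ_self T)
    have hstep := mwPotential_add_le hηT (∑ t ∈ range T, g t) (g T) (hg T (Nat.lt_succ_self T))
    have hmono : mwPotential (η T) (∑ t ∈ range T, g t) ≤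
        mwPotential (η (T - 1)) (∑ t ∈ range T, g t) := by
      rcases T.eq_zero_or_pos with rfl | hT
      · rfl
      · exact mwPotential_monotoneOn _ hηT (hη _ (by omega))
          (hη_anti (by simp only [Set.mem_Iio]; omega) (by simp) (by omega))
    have ih := ih (fun t ht => hη t (by omega)) (hη_anti.mono fun t (ht : t < T) => by
      simp only [Set.mem_Iio]; omega) (fun t ht => hg t (by omega))
    rw [sum_range_succ, sum_range_succ, Nat.add_sub_cancel]
    linarith

theorem mw_regret_le (T : ℕ) (hT : 0 < T) (η : ℕ → ℝ) (hη : ∀ t < T, 0 < η t)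
    (hη_anti : AntitoneOn η (Set.Iio T)) (g : ℕ → ι → ℝ)
    (hg : ∀ t < T, ∀ a, g t a ∈ Set.Icc (0 : ℝ) 1) (a : ι) :
    ∑ t ∈ range T, g t a - ∑ t ∈ range T, ∑ b, mwWeights (η t) (∑ τ ∈ range t, g τ) b * g t b ≤
      log (Fintype.card ι) / η (T - 1) + (∑ t ∈ range T, η t) / 8 := by
  have hlower := sub_log_card_div_le_mwPotential (hη (T - 1) (by omega))
    (∑ t ∈ range T, g t) a
  have hupper := mwPotential_le_sum T η hη hη_anti g hg
  rw [sum_add_distrib, ← sum_div] at hupper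
  rw [Finset.sum_apply] at hlower
  linarith

end MultiplicativeWeights

theorem sum_range_inv_sqrt_succ_le (T : ℕ) : ∑ t ∈ range T, (√(t + 1))⁻¹ ≤ 2 * √T := by
  induction T with
  | zero => simp
  | succ n ih =>
    have hn : (0 : ℝ) ≤ n := n.cast_nonneg
    have hpos : 0 < √(n + 1 : ℝ) := sqrt_pos.2 (by positivity)
    -- `2 (√(n+1) - √n) = 2 / (√(n+1) + √n) ≥ 1 / √(n+1)`
    have hstep : (√(n + 1 : ℝ))⁻¹ ≤ 2 * (√(n + 1 : ℝ) - √n) := by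
      rw [inv_le_iff_one_le_mul₀ hpos]
      nlinarith [sq_sqrt hn, sq_sqrt (by positivity : (0 : ℝ) ≤ n + 1), sqrt_nonneg (n : ℝ),
        sq_nonneg (√(n + 1 : ℝ) - √n)]
    rw [sum_range_succ]
    push_cast
    linarith

theorem sum_range_sqrt_div_succ_le {c : ℝ} (hc : 0 ≤ c) (T : ℕ) :
    ∑ t ∈ range T, √(c / (t + 1)) ≤ 2 * √(T * c) := by
  calc ∑ t ∈ range T, √(c / (t + 1)) = √c * ∑ t ∈ range T, (√(t + 1))⁻¹ := by
        rw [mul_sum]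
        exact sum_congr rfl fun t _ => by rw [sqrt_div hc, div_eq_mul_inv]
    _ ≤ √c * (2 * √T) := by gcongr; exact sum_range_inv_sqrt_succ_le T
    _ = 2 * √(T * c) := by rw [sqrt_mul T.cast_nonneg]; ring

/-- **Multiplicative Weights regret bound with learning rates `η t = 2√(log K / t)`.**
Given `K ≥ 2` actions and reward functions `g 0, …, g (T-1) : Fin K → [0,1]`,
let `p t` be the Multiplicative Weights distribution at round `t`
(indexed from `0`, so that round `t` is the `(t+1)`-st round and uses
learning rate `η t = 2 * √(log K / (t+1))`):
`p t a = exp (η t * ∑_{τ < t} g τ a) / ∑_b exp (η t * ∑_{τ < t} g τ b)`.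
Then for every action `a⋆`,
`∑_t g t a⋆ − ∑_t ∑_a p t a * g t a ≤ √(T * log K)`. -/
theorem mw_regret_bound_sqrt_rates
    (K T : ℕ) (hK : 2 ≤ K)
    (g : ℕ → Fin K → ℝ)
    (hg : ∀ t < T, ∀ a : Fin K, g t a ∈ Set.Icc (0 : ℝ) 1)
    (η : ℕ → ℝ)
    (hη : ∀ t < T, η t = 2 * Real.sqrt (Real.log K / (t + 1)))
    (p : ℕ → Fin K → ℝ)
    (hp : ∀ t < T, ∀ a : Fin K,
      p t a = Real.exp (η t * ∑ τ ∈ Finset.range t, g τ a) /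
        ∑ b : Fin K, Real.exp (η t * ∑ τ ∈ Finset.range t, g τ b))
    (astar : Fin K) :
    ∑ t ∈ Finset.range T, g t astar
      - ∑ t ∈ Finset.range T, ∑ a : Fin K, p t a * g t a
    ≤ Real.sqrt (T * Real.log K) := by
  rcases T.eq_zero_or_pos with rfl | hT
  · simp
  have : Nonempty (Fin K) := ⟨⟨0, by omega⟩⟩
  have hlogK : 0 < log K := log_pos (by exact_mod_cast hK)
  have hη_pos : ∀ t < T, 0 < η t := fun t ht => by rw [hη t ht]; positivity
  have hη_anti : AntitoneOn η (Set.Iio T) := fun s hs t ht hst => by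
    rw [hη s hs, hη t ht]; gcongr
  have hp_mw : ∀ t ∈ range T, ∑ a, p t a * g t a =
      ∑ a, mwWeights (η t) (∑ τ ∈ range t, g τ) a * g t a := fun t ht =>
    sum_congr rfl fun a _ => by
      simp only [hp t (mem_range.1 ht) a, mwWeights, Finset.sum_apply]
  have hregret := mw_regret_le T hT η hη_pos hη_anti g hg astar
  rw [Fintype.card_fin] at hregret
  have hlast : log K / η (T - 1) = √(T * log K) / 2 := by
    have hT' : ((T - 1 : ℕ) : ℝ) + 1 = T := by rw [Nat.cast_sub hT]; push_cast; ring
    rw [hη _ (by omega), hT', sqrt_div hlogK.le, sqrt_mul T.cast_nonneg]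
    nth_rewrite 1 [← sq_sqrt hlogK.le]
    field_simp
  have hsum : (∑ t ∈ range T, η t) / 8 ≤ √(T * log K) / 2 := by
    rw [sum_congr rfl fun t ht => hη t (mem_range.1 ht), ← mul_sum]
    linarith [sum_range_sqrt_div_succ_le hlogK.le T]
  rw [sum_congr rfl hp_mw]
  linarith
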